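/- Let k ≥ 1 and let x_1, …, x_k be real numbers satisfying: x_1 > 0; x_i ≥ 0 for all i ∈ {1, …, k}; and x_i ≤ 2·max_{j ∈ {1, …, i−1}} x_j for all i ∈ {2, …, k}. Then ∑_{i=1}^{⌈k/2⌉} 2^{-i}·x_i ≥ (1/2)·∑_{i=1}^{k} 2^{-i}·x_i. -/

import Mathlib

/-!
Let `M n = max (x 1, …, x n)`. The doubling condition gives `M (n + 1) ≤ 2 M n`, so `2⁻ⁿ M n`
is nonincreasing for `n ≥ 1`. With `m = ⌈k/2⌉`, every tail term `2⁻ⁱ x i` (`m < i ≤ k`) is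
therefore at most `2⁻ᵐ M m`, while an induction on `n` shows that the head sum
`∑_{i ≤ n} 2⁻ⁱ x i` is at least `n 2⁻ⁿ M n`. Since there are `k - m ≤ m` tail terms, the tail sum
is at most the head sum.
-/

open Finset

theorem zpow_neg_succ_mul_two (n : ℕ) :
    (2 : ℝ) ^ (-((n + 1 : ℕ) : ℤ)) * 2 = 2 ^ (-(n : ℤ)) := by
  rw [Nat.cast_succ, neg_add, zpow_add₀ two_ne_zero, zpow_neg_one, mul_assoc,
    inv_mul_cancel₀ two_ne_zero, mul_one]

def prefixMax (x : ℕ → ℝ) : ℕ → ℝ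
  | 0 => 0
  | n + 1 => max (prefixMax x n) (x (n + 1))

namespace prefixMax

variable {x : ℕ → ℝ}

theorem nonneg (x : ℕ → ℝ) : ∀ n, 0 ≤ prefixMax x n
  | 0 => le_rfl
  | n + 1 => (nonneg x n).trans (le_max_left _ _)

theorem le_of_mem_Icc {i n : ℕ} (hi : i ∈ Icc 1 n) : x i ≤ prefixMax x n := by
  induction n with
  | zero => simp at hi
  | succ n ih =>
    rcases (mem_Icc.mp hi).2.lt_or_eq with hin | rfl
    · exact (ih (mem_Icc.mpr ⟨(mem_Icc.mp hi).1, by omega⟩)).trans (le_max_left _ _)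
    · exact le_max_right _ _

theorem sup'_Icc_le (n : ℕ) (h : (Icc 1 n).Nonempty) : (Icc 1 n).sup' h x ≤ prefixMax x n :=
  sup'_le _ _ fun _ hi => le_of_mem_Icc hi

theorem succ_le_two_mul {n : ℕ} (h : x (n + 1) ≤ 2 * prefixMax x n) :
    prefixMax x (n + 1) ≤ 2 * prefixMax x n :=
  max_le (by linarith [nonneg x n]) h

theorem zpow_neg_mul_le_of_le {m n : ℕ} (hm : 1 ≤ m) (hmn : m ≤ n)
    (hdouble : ∀ i ∈ Icc 2 n, x i ≤ 2 * prefixMax x (i - 1)) :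
    (2 : ℝ) ^ (-(n : ℤ)) * prefixMax x n ≤ (2 : ℝ) ^ (-(m : ℤ)) * prefixMax x m := by
  induction n, hmn using Nat.le_induction with
  | base => rfl
  | succ n hmn ih =>
    have hstep := succ_le_two_mul (hdouble (n + 1) (mem_Icc.mpr ⟨by omega, le_rfl⟩))
    refine le_trans ?_ (ih fun i hi => hdouble i (Icc_subset_Icc_right n.le_succ hi))
    calc (2 : ℝ) ^ (-((n + 1 : ℕ) : ℤ)) * prefixMax x (n + 1)
        ≤ (2 : ℝ) ^ (-((n + 1 : ℕ) : ℤ)) * (2 * prefixMax x n) := by gcongr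
      _ = (2 : ℝ) ^ (-(n : ℤ)) * prefixMax x n := by rw [← mul_assoc, zpow_neg_succ_mul_two]

theorem zpow_neg_mul_apply_le {m i : ℕ} (hm : 1 ≤ m) (hmi : m ≤ i)
    (hdouble : ∀ j ∈ Icc 2 i, x j ≤ 2 * prefixMax x (j - 1)) :
    (2 : ℝ) ^ (-(i : ℤ)) * x i ≤ (2 : ℝ) ^ (-(m : ℤ)) * prefixMax x m :=
  calc (2 : ℝ) ^ (-(i : ℤ)) * x i ≤ (2 : ℝ) ^ (-(i : ℤ)) * prefixMax x i := by
        gcongr; exact le_of_mem_Icc (mem_Icc.mpr ⟨by omega, le_rfl⟩)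
    _ ≤ (2 : ℝ) ^ (-(m : ℤ)) * prefixMax x m := zpow_neg_mul_le_of_le hm hmi hdouble

theorem succ_mul_succ_le {n : ℕ} (hx : 0 ≤ x (n + 1))
    (hdouble : 1 ≤ n → x (n + 1) ≤ 2 * prefixMax x n) :
    (n + 1) * prefixMax x (n + 1) ≤ 2 * n * prefixMax x n + x (n + 1) := by
  rcases Nat.eq_zero_or_pos n with rfl | hn
  · simp [prefixMax, hx]
  have hdn := hdouble hn
  have hM := nonneg x n
  have hn' : (1 : ℝ) ≤ n := by exact_mod_cast hn
  rw [prefixMax]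
  rcases max_cases (prefixMax x n) (x (n + 1)) with ⟨hmax, -⟩ | ⟨hmax, -⟩ <;> rw [hmax] <;>
    nlinarith

end prefixMax

theorem mul_zpow_mul_prefixMax_le_sum {x : ℕ → ℝ} {n : ℕ} (hx : ∀ i ∈ Icc 1 n, 0 ≤ x i)
    (hdouble : ∀ i ∈ Icc 2 n, x i ≤ 2 * prefixMax x (i - 1)) :
    n * (2 : ℝ) ^ (-(n : ℤ)) * prefixMax x n ≤ ∑ i ∈ Icc 1 n, (2 : ℝ) ^ (-(i : ℤ)) * x i := by
  induction n with
  | zero => simp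
  | succ n ih =>
    have ih := ih (fun i hi => hx i (Icc_subset_Icc_right n.le_succ hi))
      (fun i hi => hdouble i (Icc_subset_Icc_right n.le_succ hi))
    have hstep := prefixMax.succ_mul_succ_le (hx (n + 1) (mem_Icc.mpr ⟨by omega, le_rfl⟩))
      fun hn => by simpa using hdouble (n + 1) (mem_Icc.mpr ⟨by omega, le_rfl⟩)
    rw [← zpow_neg_succ_mul_two] at ih
    rw [sum_Icc_succ_top (by omega)]
    calc ((n + 1 : ℕ) : ℝ) * (2 : ℝ) ^ (-((n + 1 : ℕ) : ℤ)) * prefixMax x (n + 1)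
        = (2 : ℝ) ^ (-((n + 1 : ℕ) : ℤ)) * ((n + 1) * prefixMax x (n + 1)) := by push_cast; ring
      _ ≤ (2 : ℝ) ^ (-((n + 1 : ℕ) : ℤ)) * (2 * n * prefixMax x n + x (n + 1)) := by gcongr
      _ = n * ((2 : ℝ) ^ (-((n + 1 : ℕ) : ℤ)) * 2) * prefixMax x n
            + (2 : ℝ) ^ (-((n + 1 : ℕ) : ℤ)) * x (n + 1) := by ring
      _ ≤ _ := by gcongr

/-- For `k ≥ 1` and reals `x_1, …, x_k` with `x_1 > 0`, `x_i ≥ 0` for all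
`i ∈ {1, …, k}`, and `x_i ≤ 2·max_{j ∈ {1, …, i−1}} x_j` for `i ∈ {2, …, k}`:
`∑_{i=1}^{⌈k/2⌉} 2^{-i}·x_i ≥ (1/2)·∑_{i=1}^{k} 2^{-i}·x_i`. -/
theorem stmt_11 (k : ℕ) (x : ℕ → ℝ)
    (hx0 : ∀ i ∈ Finset.Icc 1 k, 0 ≤ x i)
    (hx2 : ∀ i, ∀ h2 : 2 ≤ i, i ≤ k →
      x i ≤ 2 * (Finset.Icc 1 (i - 1)).sup' (Finset.nonempty_Icc.mpr (by omega)) x) :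
    ∑ i ∈ Finset.Icc 1 ((k + 1) / 2), (2 : ℝ) ^ (-(i : ℤ)) * x i ≥
      (1 / 2) * ∑ i ∈ Finset.Icc 1 k, (2 : ℝ) ^ (-(i : ℤ)) * x i := by
  set m := (k + 1) / 2
  have hdouble : ∀ i ∈ Icc 2 k, x i ≤ 2 * prefixMax x (i - 1) := fun i hi =>
    (hx2 i (mem_Icc.mp hi).1 (mem_Icc.mp hi).2).trans (by gcongr; exact prefixMax.sup'_Icc_le _ _)
  set c := (2 : ℝ) ^ (-(m : ℤ)) * prefixMax x m
  have hhead : m * c ≤ ∑ i ∈ Icc 1 m, (2 : ℝ) ^ (-(i : ℤ)) * x i := by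
    rw [← mul_assoc]
    exact mul_zpow_mul_prefixMax_le_sum (fun i hi => hx0 i (Icc_subset_Icc_right (by omega) hi))
      fun i hi => hdouble i (Icc_subset_Icc_right (by omega) hi)
  have htail : ∑ i ∈ Ioc m k, (2 : ℝ) ^ (-(i : ℤ)) * x i ≤ m * c := by
    calc ∑ i ∈ Ioc m k, (2 : ℝ) ^ (-(i : ℤ)) * x i ≤ #(Ioc m k) • c := by
          refine sum_le_card_nsmul _ _ _ fun i hi => ?_
          have ⟨hmi, hik⟩ := mem_Ioc.mp hi
          exact prefixMax.zpow_neg_mul_apply_le (by omega) hmi.le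
            fun j hj => hdouble j (Icc_subset_Icc_right hik hj)
      _ ≤ m * c := by
          rw [Nat.card_Ioc, nsmul_eq_mul]
          gcongr
          · positivity [prefixMax.nonneg x m]
          · omega
  have hsplit : ∑ i ∈ Icc 1 k, (2 : ℝ) ^ (-(i : ℤ)) * x i =
      ∑ i ∈ Icc 1 m, (2 : ℝ) ^ (-(i : ℤ)) * x i + ∑ i ∈ Ioc m k, (2 : ℝ) ^ (-(i : ℤ)) * x i :=
    (sum_Ioc_consecutive _ (m := 0) (n := m) (k := k) (Nat.zero_le m) (by omega)).symm
  rw [ge_iff_le, hsplit]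
  linarith
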